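/- arXiv:1201.1062 — 2 statements merged into one kernel-verified Lean document; each statement's English description precedes it below -/
import Mathlib

section
/- Let A and B be finite-valued random variables such that the pair (A,B) is quasi-uniform. Then there exists a random variable W (on the same probability space, jointly distributed with A and B) such that H(W) = H(A|B) and H(A | B, W) = 0. -/
open scoped Classical BigOperators

/-- Probability of the event `X = a` under the mass function `p`. -/
noncomputable def dist {Ω : Type*} [Fintype Ω] (p : Ω → ℝ) {A : Type*} (X : Ω → A) (a : A) : ℝ :=
  ∑ ω ∈ Finset.univ.filter (fun ω => X ω = a), p ω

/-- The (finite) support of a random variable. -/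
noncomputable def supp {Ω : Type*} [Fintype Ω] (p : Ω → ℝ) {A : Type*} (X : Ω → A) : Finset A :=
  (Finset.univ.image X).filter (fun a => 0 < dist p X a)

/-- Shannon entropy (in bits) of a random variable. -/
noncomputable def entH {Ω : Type*} [Fintype Ω] (p : Ω → ℝ) {A : Type*} (X : Ω → A) : ℝ :=
  -∑ a ∈ Finset.univ.image X, dist p X a * Real.logb 2 (dist p X a)

/-- `p` is a probability mass function. -/
def IsProb {Ω : Type*} [Fintype Ω] (p : Ω → ℝ) : Prop :=
  (∀ ω, 0 ≤ p ω) ∧ ∑ ω, p ω = 1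

/-- `X` is uniformly distributed over its support. -/
def UniformOnSupport {Ω : Type*} [Fintype Ω] (p : Ω → ℝ) {A : Type*} (X : Ω → A) : Prop :=
  ∀ a ∈ supp p X, dist p X a = ((supp p X).card : ℝ)⁻¹

/-! Write `S` for the support of `(X, Y)` and `T` for that of `Y`. Quasi-uniformity forces every
fiber of `S` over `T` to have the same size `n = |S| / |T|`. Label the points of each fiber by
`0, …, n - 1` and let `W` be the label of `(X, Y)`. The label and `Y` determine `(X, Y)`, so
`H(Y, W) = H(X, Y, W) = H(X, Y)`; and each label is carried by exactly one point of every fiber,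
so `W` is uniform on `n` values and `H(W) = log n = H(X, Y) - H(Y)`. -/

open Finset

section Entropy

variable {Ω A C : Type*} [Fintype Ω] {p : Ω → ℝ}

lemma mem_supp_iff {X : Ω → A} {a : A} : a ∈ supp p X ↔ 0 < dist p X a := by
  refine ⟨fun h => (mem_filter.1 h).2, fun h => mem_filter.2 ⟨?_, h⟩⟩
  obtain ⟨ω, hω, -⟩ := exists_ne_zero_of_sum_ne_zero h.ne'
  exact mem_image.2 ⟨ω, mem_univ ω, (mem_filter.1 hω).2⟩

lemma IsProb.dist_nonneg (hp : IsProb p) (X : Ω → A) (a : A) : 0 ≤ dist p X a :=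
  sum_nonneg fun ω _ => hp.1 ω

lemma IsProb.dist_eq_zero_of_notMem_supp (hp : IsProb p) {X : Ω → A} {a : A}
    (ha : a ∉ supp p X) : dist p X a = 0 :=
  le_antisymm (not_lt.1 (mt mem_supp_iff.2 ha)) (hp.dist_nonneg X a)

lemma IsProb.sum_dist (hp : IsProb p) (X : Ω → A) : ∑ a ∈ univ.image X, dist p X a = 1 :=
  hp.2 ▸ sum_fiberwise_of_maps_to (fun ω _ => mem_image_of_mem X (mem_univ ω)) p

lemma IsProb.supp_nonempty (hp : IsProb p) (X : Ω → A) : (supp p X).Nonempty := by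
  obtain ⟨a, -, ha⟩ := exists_ne_zero_of_sum_ne_zero (hp.sum_dist X ▸ one_ne_zero)
  exact ⟨a, mem_supp_iff.2 ((hp.dist_nonneg X a).lt_of_ne' ha)⟩

lemma IsProb.entH_eq_logb (hp : IsProb p) {X : Ω → A} {k : ℝ}
    (hX : ∀ a, dist p X a = 0 ∨ dist p X a = k⁻¹) : entH p X = Real.logb 2 k := by
  have h (a : A) : dist p X a * Real.logb 2 (dist p X a) = dist p X a * Real.logb 2 k⁻¹ := by
    rcases hX a with h | h <;> simp [h]
  rw [entH, sum_congr rfl fun a _ => h a, ← sum_mul, hp.sum_dist, one_mul, Real.logb_inv, neg_neg]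

lemma IsProb.dist_comp [DecidableEq C] (hp : IsProb p) (X : Ω → A) (f : A → C) (c : C) :
    dist p (fun ω => f (X ω)) c = ∑ a ∈ supp p X with f a = c, dist p X a := by
  have hsub : (supp p X).filter (f · = c) ⊆ (univ.image X).filter (f · = c) :=
    filter_subset_filter _ (filter_subset _ _)
  rw [sum_subset hsub fun a ha ha' => hp.dist_eq_zero_of_notMem_supp fun h =>
    ha' (mem_filter.2 ⟨h, (mem_filter.1 ha).2⟩)]
  unfold _root_.dist
  rw [sum_fiberwise_eq_sum_filter univ _ X p]
  congr 1
  ext ω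
  simp

lemma UniformOnSupport.dist_eq_zero_or (hp : IsProb p) {X : Ω → A} (hX : UniformOnSupport p X)
    (a : A) : dist p X a = 0 ∨ dist p X a = (#(supp p X) : ℝ)⁻¹ := by
  by_cases ha : a ∈ supp p X
  · exact .inr (hX a ha)
  · exact .inl (hp.dist_eq_zero_of_notMem_supp ha)

lemma UniformOnSupport.entH_eq (hp : IsProb p) {X : Ω → A} (hX : UniformOnSupport p X) :
    entH p X = Real.logb 2 #(supp p X) :=
  hp.entH_eq_logb (hX.dist_eq_zero_or hp)

lemma UniformOnSupport.dist_comp [DecidableEq C] (hp : IsProb p) {X : Ω → A}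
    (hX : UniformOnSupport p X) (f : A → C) (c : C) :
    dist p (fun ω => f (X ω)) c = #{a ∈ supp p X | f a = c} * (#(supp p X) : ℝ)⁻¹ := by
  rw [hp.dist_comp, sum_congr rfl fun a ha => hX a (mem_filter.1 ha).1, sum_const, nsmul_eq_mul]

lemma UniformOnSupport.entH_comp_of_injOn (hp : IsProb p) {X : Ω → A}
    (hX : UniformOnSupport p X) {f : A → C} (hf : Set.InjOn f (supp p X)) :
    entH p (fun ω => f (X ω)) = entH p X := by
  rw [hX.entH_eq hp]
  refine hp.entH_eq_logb fun c => ?_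
  have hle : #{a ∈ supp p X | f a = c} ≤ 1 := card_le_one.2 fun a ha b hb =>
    hf (mem_filter.1 ha).1 (mem_filter.1 hb).1 ((mem_filter.1 ha).2.trans (mem_filter.1 hb).2.symm)
  rw [hX.dist_comp hp]
  interval_cases #{a ∈ supp p X | f a = c} <;> simp

lemma IsProb.apply_mem_supp_comp (hp : IsProb p) {X : Ω → A} (f : A → C) {a : A}
    (ha : a ∈ supp p X) : f a ∈ supp p (fun ω => f (X ω)) := by
  rw [mem_supp_iff, hp.dist_comp]
  exact (mem_supp_iff.1 ha).trans_le
    (single_le_sum (fun b _ => hp.dist_nonneg X b) (mem_filter.2 ⟨ha, rfl⟩))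

end Entropy

section Fibers

variable {α β : Type*}

lemma card_filter_eq_ite_of_bijOn {g : α → ℕ} {s : Finset α} {n : ℕ}
    (hg : Set.BijOn g s (range n)) (w : ℕ) : #{a ∈ s | g a = w} = if w < n then 1 else 0 := by
  split_ifs with hw
  · obtain ⟨a, ha, rfl⟩ := hg.surjOn (mem_range.2 hw)
    refine card_eq_one.2 ⟨a, ext fun b => ?_⟩
    simp only [mem_filter, mem_singleton]
    exact ⟨fun hb => hg.injOn hb.1 ha hb.2, by rintro rfl; exact ⟨ha, rfl⟩⟩
  · refine card_eq_zero.2 (filter_eq_empty_iff.2 fun a ha haw => hw ?_)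
    exact haw ▸ mem_range.1 (hg.mapsTo ha)

lemma exists_bijOn_fibers (f : α → β) (S : Finset α) (T : Finset β) {n : ℕ}
    (hcard : ∀ b ∈ T, #{a ∈ S | f a = b} = n) :
    ∃ r : α → ℕ, ∀ b ∈ T, Set.BijOn r (S.filter (f · = b) : Set α) (range n) := by
  have (b : β) :
      ∃ g : α → ℕ, b ∈ T → Set.BijOn g (S.filter (f · = b) : Set α) (range n) := by
    by_cases hb : b ∈ T
    · obtain ⟨g, hg⟩ := (finite_toSet {a ∈ S | f a = b}).exists_bijOn_of_encard_eq
        (t := (range n : Set ℕ))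
        (by simp only [Set.encard_coe_eq_coe_finsetCard, hcard b hb, card_range])
      exact ⟨g, fun _ => hg⟩
    · exact ⟨0, fun h => absurd h hb⟩
  choose g hg using this
  refine ⟨fun a => g (f a) a, fun b hb => (hg b hb).congr fun a ha => ?_⟩
  simp only [(mem_filter.1 ha).2]

lemma exists_fiberwise_labelling (f : α → β) {S : Finset α} {T : Finset β} {n : ℕ}
    (hS : ∀ a ∈ S, f a ∈ T) (hcard : ∀ b ∈ T, #{a ∈ S | f a = b} = n) :
    ∃ r : α → ℕ, Set.InjOn (fun a => (f a, r a)) S ∧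
      ∀ w, #{a ∈ S | r a = w} = if w < n then #T else 0 := by
  obtain ⟨r, hr⟩ := exists_bijOn_fibers f S T hcard
  refine ⟨r, fun a ha a' ha' h => ?_, fun w => ?_⟩
  · simp only [Prod.mk.injEq] at h
    exact (hr (f a) (hS a ha)).injOn (mem_filter.2 ⟨ha, rfl⟩)
      (mem_filter.2 ⟨ha', h.1.symm⟩) h.2
  · have hfiber (b : β) (hb : b ∈ T) :
        #{a ∈ {a ∈ S | r a = w} | f a = b} = if w < n then 1 else 0 := by
      rw [filter_comm]
      exact card_filter_eq_ite_of_bijOn (hr b hb) w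
    rw [card_eq_sum_card_fiberwise fun a ha => hS a (mem_filter.1 ha).1, sum_congr rfl hfiber]
    split_ifs <;> simp

end Fibers

lemma card_filter_snd_mul_card_supp {Ω A B : Type*} [Fintype Ω] {p : Ω → ℝ} (hp : IsProb p)
    {X : Ω → A} {Y : Ω → B} (hY : UniformOnSupport p Y)
    (hXY : UniformOnSupport p fun ω => (X ω, Y ω)) {b : B} (hb : b ∈ supp p Y) :
    #{q ∈ supp p (fun ω => (X ω, Y ω)) | q.2 = b} * #(supp p Y) =
      #(supp p fun ω => (X ω, Y ω)) := by
  have h : dist p Y b = _ := hXY.dist_comp hp Prod.snd b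
  rw [hY b hb] at h
  have hT : (#(supp p Y) : ℝ) ≠ 0 := Nat.cast_ne_zero.2 (card_ne_zero_of_mem hb)
  have hS : (#(supp p fun ω => (X ω, Y ω)) : ℝ) ≠ 0 := by
    intro hS
    rw [hS, inv_zero, mul_zero] at h
    exact inv_ne_zero hT h
  field_simp at h
  rw [mul_comm]
  exact_mod_cast h.symm

lemma exists_card_filter_snd_eq {Ω A B : Type*} [Fintype Ω] {p : Ω → ℝ} (hp : IsProb p)
    {X : Ω → A} {Y : Ω → B} (hY : UniformOnSupport p Y)
    (hXY : UniformOnSupport p fun ω => (X ω, Y ω)) :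
    ∃ n, 0 < n ∧ n * #(supp p Y) = #(supp p fun ω => (X ω, Y ω)) ∧
      ∀ b ∈ supp p Y, #{q ∈ supp p (fun ω => (X ω, Y ω)) | q.2 = b} = n := by
  obtain ⟨b₀, hb₀⟩ := hp.supp_nonempty Y
  have hST := card_filter_snd_mul_card_supp hp hY hXY hb₀
  refine ⟨_, Nat.pos_of_ne_zero (left_ne_zero_of_mul (hST ▸ (hp.supp_nonempty _).card_pos.ne')),
    hST, fun b hb => Nat.eq_of_mul_eq_mul_right (card_pos.2 ⟨b₀, hb₀⟩)
      ((card_filter_snd_mul_card_supp hp hY hXY hb).trans hST.symm)⟩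

theorem quasi_uniform_exists_W_general
    {Ω A B : Type*} [Fintype Ω] (p : Ω → ℝ) (X : Ω → A) (Y : Ω → B)
    (hp : IsProb p)
    (hY : UniformOnSupport p Y)
    (hXY : UniformOnSupport p (fun ω => (X ω, Y ω))) :
    ∃ (C : Type) (W : Ω → C),
      entH p W = entH p (fun ω => (X ω, Y ω)) - entH p Y ∧
      entH p (fun ω => (X ω, Y ω, W ω)) - entH p (fun ω => (Y ω, W ω)) = 0 := by
  obtain ⟨n, hn, hST, hfiber⟩ := exists_card_filter_snd_eq hp hY hXY
  obtain ⟨r, hinj, hcount⟩ := exists_fiberwise_labelling Prod.snd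
    (fun q hq => hp.apply_mem_supp_comp (X := fun ω => (X ω, Y ω)) Prod.snd hq) hfiber
  have hT : (#(supp p Y) : ℝ) ≠ 0 := Nat.cast_ne_zero.2 (hp.supp_nonempty Y).card_pos.ne'
  refine ⟨ℕ, fun ω => r (X ω, Y ω), ?_, ?_⟩
  · have hW (w : ℕ) : dist p (fun ω => r (X ω, Y ω)) w = 0 ∨
        dist p (fun ω => r (X ω, Y ω)) w = (n : ℝ)⁻¹ := by
      rw [hXY.dist_comp hp r w, hcount w, ← hST]
      split_ifs
      · right
        push_cast
        rw [mul_inv, mul_left_comm, mul_inv_cancel₀ hT, mul_one]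
      · simp
    rw [hp.entH_eq_logb hW, hXY.entH_eq hp, hY.entH_eq hp, ← hST, Nat.cast_mul,
      Real.logb_mul (Nat.cast_ne_zero.2 hn.ne') hT, add_sub_cancel_right]
  · have hYW : entH p (fun ω => (Y ω, r (X ω, Y ω))) = entH p (fun ω => (X ω, Y ω)) :=
      hXY.entH_comp_of_injOn hp hinj
    have hXYW : entH p (fun ω => (X ω, Y ω, r (X ω, Y ω))) = entH p (fun ω => (X ω, Y ω)) :=
      hXY.entH_comp_of_injOn hp (f := fun q => (q.1, q.2, r q)) fun _ _ _ _ h =>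
        congrArg (fun t => (t.1, t.2.1)) h
    rw [hXYW, hYW, sub_self]

theorem quasi_uniform_exists_W
    {Ω A B : Type*} [Fintype Ω] (p : Ω → ℝ) (X : Ω → A) (Y : Ω → B)
    (hp : IsProb p)
    (hX : UniformOnSupport p X) (hY : UniformOnSupport p Y)
    (hXY : UniformOnSupport p (fun ω => (X ω, Y ω))) :
    ∃ (C : Type) (W : Ω → C),
      entH p W = entH p (fun ω => (X ω, Y ω)) - entH p Y ∧
      entH p (fun ω => (X ω, Y ω, W ω)) - entH p (fun ω => (Y ω, W ω)) = 0 :=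
  quasi_uniform_exists_W_general p X Y hp hY hXY
end

section
/- Let V_s, s in S, be a finite family of subspaces of a finite-dimensional vector space. Define W_s = V_s ∩ span(V_j : j ≠ s) and A = span(W_s : s in S). Then dim(span(V_s : s in S)) − dim A = Σ_{s in S} (dim(span(V_s, A)) − dim A), i.e., the images T_A(V_s) have dimensions summing to the dimension of their joint span; moreover dim A = dim(span(V_s : s in S)) − Σ_{s in S} (dim(span(V_s : s in S)) − dim(span(V_j : j ≠ s))). -/
/-!
Modulo `A` the `V s` become independent: since `A ≤ ⨆ j ≠ s, V j`, the part of `V s` that meets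
`A ⊔ ⨆ j ≠ s, V j` is `V s ⊓ ⨆ j ≠ s, V j = W s ≤ A`. Independence modulo `A` makes codimensions
over `A` additive, which is the first identity. Both `dim (V s ⊔ A) - dim A` and
`dim (⨆ j, V j) - dim (⨆ j ≠ s, V j)` equal `dim (V s) - dim (W s)` by the dimension formula for
`P ⊔ Q`, so the second identity follows from the first.
-/

open Module Submodule

section CompleteLattice

variable {α ι : Type*} [CompleteLattice α]

def commonPart (V : ι → α) : α :=
  ⨆ i, V i ⊓ ⨆ j, ⨆ _ : j ≠ i, V j

theorem commonPart_le_iSup (V : ι → α) : commonPart V ≤ ⨆ i, V i :=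
  iSup_mono fun _ => inf_le_left

theorem commonPart_le_iSup_ne (V : ι → α) (s : ι) : commonPart V ≤ ⨆ j, ⨆ _ : j ≠ s, V j := by
  refine iSup_le fun i => ?_
  rcases eq_or_ne i s with rfl | his
  · exact inf_le_right
  · exact inf_le_left.trans (le_iSup₂_of_le i his le_rfl)

theorem inf_commonPart (V : ι → α) (s : ι) :
    V s ⊓ commonPart V = V s ⊓ ⨆ j, ⨆ _ : j ≠ s, V j :=
  le_antisymm (inf_le_inf_left _ (commonPart_le_iSup_ne V s))
    (le_inf inf_le_left (le_iSup (fun i => V i ⊓ ⨆ j, ⨆ _ : j ≠ i, V j) s))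

theorem inf_iSup_ne_sup_commonPart_le (V : ι → α) (s : ι) :
    V s ⊓ ((⨆ j, ⨆ _ : j ≠ s, V j) ⊔ commonPart V) ≤ commonPart V := by
  rw [sup_eq_left.mpr (commonPart_le_iSup_ne V s), ← inf_commonPart]
  exact inf_le_right

end CompleteLattice

section Finrank

variable {F M : Type*} [Field F] [AddCommGroup M] [Module F M] [FiniteDimensional F M]

theorem finrank_sup_sub_finrank_right (P Q : Submodule F M) :
    (finrank F ↥(P ⊔ Q) : ℤ) - finrank F Q = finrank F P - finrank F ↥(P ⊓ Q) := by
  have := finrank_sup_add_finrank_inf_eq P Q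
  omega

theorem finrank_sup_sup_sub_finrank_of_inf_le {X Y A : Submodule F M} (h : X ⊓ (Y ⊔ A) ≤ A) :
    (finrank F ↥(X ⊔ Y ⊔ A) : ℤ) - finrank F A
      = ((finrank F ↥(X ⊔ A) : ℤ) - finrank F A) + ((finrank F ↥(Y ⊔ A) : ℤ) - finrank F A) := by
  have hinf : (X ⊔ A) ⊓ (Y ⊔ A) = A := by
    rw [sup_comm X, sup_inf_assoc_of_le X le_sup_right]
    exact sup_eq_left.mpr h
  have := finrank_sup_add_finrank_inf_eq (X ⊔ A) (Y ⊔ A)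
  rw [hinf, ← sup_sup_distrib_right] at this
  omega

variable {S : Type*}

theorem finrank_finset_sup_sup_sub_finrank [DecidableEq S] {X : S → Submodule F M}
    {A : Submodule F M} (h : ∀ s, X s ⊓ ((⨆ j, ⨆ _ : j ≠ s, X j) ⊔ A) ≤ A) (t : Finset S) :
    (finrank F ↥(t.sup X ⊔ A) : ℤ) - finrank F A
      = ∑ s ∈ t, ((finrank F ↥(X s ⊔ A) : ℤ) - finrank F A) := by
  induction t using Finset.induction_on with
  | empty => rw [Finset.sup_empty, bot_sup_eq, sub_self, Finset.sum_empty]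
  | @insert a t ha ih =>
    have hle : t.sup X ≤ ⨆ j, ⨆ _ : j ≠ a, X j :=
      Finset.sup_le fun j hj => le_iSup₂_of_le j (ne_of_mem_of_not_mem hj ha) le_rfl
    rw [Finset.sup_insert, Finset.sum_insert ha, ← ih]
    exact finrank_sup_sup_sub_finrank_of_inf_le
      ((inf_le_inf_left _ (sup_le_sup_right hle A)).trans (h a))

theorem finrank_iSup_sup_sub_finrank [Fintype S] {X : S → Submodule F M} {A : Submodule F M}
    (h : ∀ s, X s ⊓ ((⨆ j, ⨆ _ : j ≠ s, X j) ⊔ A) ≤ A) :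
    (finrank F ↥((⨆ s, X s) ⊔ A) : ℤ) - finrank F A
      = ∑ s, ((finrank F ↥(X s ⊔ A) : ℤ) - finrank F A) := by
  classical
  rw [← Finset.sup_univ_eq_iSup]
  exact finrank_finset_sup_sup_sub_finrank h Finset.univ

theorem finrank_sup_commonPart_sub_finrank (V : S → Submodule F M) (s : S) :
    (finrank F ↥(V s ⊔ commonPart V) : ℤ) - finrank F ↥(commonPart V)
      = (finrank F ↥(⨆ j, V j) : ℤ) - finrank F ↥(⨆ j, ⨆ _ : j ≠ s, V j) := by
  rw [finrank_sup_sub_finrank_right, inf_commonPart, iSup_split_single V s,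
    finrank_sup_sub_finrank_right]

end Finrank

theorem independence_after_quotienting_common_part
    {F M : Type*} [Field F] [AddCommGroup M] [Module F M] [FiniteDimensional F M]
    {S : Type*} [Fintype S]
    (V : S → Submodule F M)
    (W : S → Submodule F M) (hW : ∀ s, W s = V s ⊓ ⨆ j, ⨆ _ : j ≠ s, V j)
    (A : Submodule F M) (hA : A = ⨆ s, W s) :
    (Module.finrank F ↥(⨆ s, V s) : ℤ) - Module.finrank F A
        = ∑ s : S, ((Module.finrank F ↥(V s ⊔ A) : ℤ) - Module.finrank F A) ∧
    (Module.finrank F A : ℤ)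
        = (Module.finrank F ↥(⨆ s, V s) : ℤ)
          - ∑ s : S, ((Module.finrank F ↥(⨆ j, V j) : ℤ)
              - Module.finrank F ↥(⨆ j, ⨆ _ : j ≠ s, V j)) := by
  obtain rfl : A = commonPart V := by rw [hA, funext hW]; rfl
  have hsum := finrank_iSup_sup_sub_finrank (inf_iSup_ne_sup_commonPart_le V)
  rw [sup_eq_left.mpr (commonPart_le_iSup V)] at hsum
  refine ⟨hsum, ?_⟩
  simp only [← finrank_sup_commonPart_sub_finrank V]
  linarith
end
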